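/- Fix n ∈ ℕ, n ≥ 1, real numbers a₁ > 0, a₂ > 0 and real numbers c₁, c₂ with c₁² > c₂². For h > 0 let τ_n(h) be the continuous complementary Bannai–Ito recurrence coefficient with parameters (a₁, hc₁, a₂, hc₂). Then as h → ∞, τ_n(h)/(h²(c₁²−c₂²)) converges to u_n, where u_{2m} = m(m+2a₁−1)/((2m+2a₁+a₂−2)(2m+2a₁+a₂−1)) and u_{2m+1} = (m+2a₁+a₂−1)(m+a₂)/((2m+2a₁+a₂−1)(2m+2a₁+a₂)); moreover the diagonal recurrence coefficient (−1)^n hc₂/(h·√(c₁²−c₂²)) equals (−1)^n c₂/√(c₁²−c₂²) for all h. -/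
import Mathlib


open Filter Complex

/-- The (complex) recurrence coefficients `τₙ` of the continuous complementary
Bannai–Ito polynomials with parameters `(a₁, b₁, a₂, b₂)`. -/
noncomputable def ccBItau (a₁ b₁ a₂ b₂ : ℝ) (n : ℕ) : ℂ :=
  let m : ℕ := n / 2
  if Even n then
    (m : ℂ) * ((m : ℂ) + 2 * a₁ - 1) * ((m : ℂ) + a₁ + a₂ - 1 + I * ((b₁ : ℂ) - b₂)) *
        ((m : ℂ) + a₁ + a₂ - 1 - I * ((b₁ : ℂ) + b₂)) /
      ((2 * (m : ℂ) + 2 * a₁ + a₂ - 2) * (2 * (m : ℂ) + 2 * a₁ + a₂ - 1))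
  else
    ((m : ℂ) + 2 * a₁ + a₂ - 1) * ((m : ℂ) + a₂) * ((m : ℂ) + a₁ + I * ((b₁ : ℂ) + b₂)) *
        ((m : ℂ) + a₁ - I * ((b₁ : ℂ) - b₂)) /
      ((2 * (m : ℂ) + 2 * a₁ + a₂ - 1) * (2 * (m : ℂ) + 2 * a₁ + a₂))

/-- The recurrence coefficients `uₙ` of the monic Chihara polynomials with parameters
`(2a₁ - 1, a₂ - 1)`-type normalization, as arising in the contraction. -/
noncomputable def chiharaULim (a₁ a₂ : ℝ) (n : ℕ) : ℝ :=
  let m : ℕ := n / 2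
  if Even n then
    (m : ℝ) * ((m : ℝ) + 2 * a₁ - 1) /
      ((2 * (m : ℝ) + 2 * a₁ + a₂ - 2) * (2 * (m : ℝ) + 2 * a₁ + a₂ - 1))
  else
    ((m : ℝ) + 2 * a₁ + a₂ - 1) * ((m : ℝ) + a₂) /
      ((2 * (m : ℝ) + 2 * a₁ + a₂ - 1) * (2 * (m : ℝ) + 2 * a₁ + a₂))


lemma aux_lin (A s : ℝ) :
    Tendsto (fun h : ℝ => ((A : ℂ) + I * h * s) / h) atTop (nhds (I * s)) := by
  have h0 : Tendsto (fun h : ℝ => ((h⁻¹ : ℝ) : ℂ)) atTop (nhds 0) := by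
    simpa [Function.comp_def] using
      (Complex.continuous_ofReal.tendsto 0).comp tendsto_inv_atTop_zero
  have h1 : Tendsto (fun h : ℝ => (A : ℂ) * ((h : ℂ))⁻¹ + I * s) atTop (nhds (I * s)) := by
    have := (h0.const_mul (A : ℂ)).add (tendsto_const_nhds (x := I * (s : ℂ)))
    simpa using this
  refine h1.congr' ?_
  filter_upwards [eventually_ne_atTop (0 : ℝ)] with h hh
  have hhc : (h : ℂ) ≠ 0 := by exact_mod_cast hh
  field_simp

lemma aux_lin_neg (A s : ℝ) :
    Tendsto (fun h : ℝ => ((A : ℂ) - I * h * s) / h) atTop (nhds (-(I * s))) := by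
  have := aux_lin A (-s)
  simp only [Complex.ofReal_neg] at this
  convert this using 2 <;> ring

lemma aux_ii (c₁ c₂ : ℝ) :
    I * ((c₁ : ℂ) - c₂) * -(I * ((c₁ : ℂ) + c₂)) = (c₁ : ℂ) ^ 2 - (c₂ : ℂ) ^ 2 := by
  linear_combination ((c₂ : ℂ) ^ 2 - (c₁ : ℂ) ^ 2) * Complex.I_sq


/-- the `h → ∞` limit of the continuous complementary Bannai–Ito
recurrence coefficients with parameters `(a₁, hc₁, a₂, hc₂)`, normalized by
`h²(c₁² - c₂²)`, yields the Chihara recurrence coefficients; and the diagonal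
coefficient is identically `(-1)ⁿ c₂ / √(c₁² - c₂²)`. -/
theorem ccBannaiIto_to_Chihara_limit
    (n : ℕ) (hn : 1 ≤ n) (a₁ a₂ c₁ c₂ : ℝ) (ha₁ : a₁ > 0) (ha₂ : a₂ > 0)
    (hc : c₁ ^ 2 > c₂ ^ 2) :
    Tendsto (fun h : ℝ => ccBItau a₁ (h * c₁) a₂ (h * c₂) n / ((h ^ 2 * (c₁ ^ 2 - c₂ ^ 2) : ℝ) : ℂ))
      atTop (nhds ((chiharaULim a₁ a₂ n : ℝ) : ℂ)) ∧
    ∀ h : ℝ, h > 0 →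
      (-1 : ℝ) ^ n * (h * c₂) / (h * Real.sqrt (c₁ ^ 2 - c₂ ^ 2)) =
        (-1 : ℝ) ^ n * c₂ / Real.sqrt (c₁ ^ 2 - c₂ ^ 2) := by
  have hcc : c₁ ^ 2 - c₂ ^ 2 ≠ 0 := by linarith
  have hccC : ((c₁ : ℂ) ^ 2 - (c₂ : ℂ) ^ 2) ≠ 0 := by
    have : (((c₁ ^ 2 - c₂ ^ 2 : ℝ)) : ℂ) ≠ 0 := Complex.ofReal_ne_zero.2 hcc
    push_cast at this; exact this
  refine ⟨?_, ?_⟩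
  · set m : ℕ := n / 2 with hm
    by_cases hev : Even n
    · have hm1 : 1 ≤ m := by obtain ⟨k, hk⟩ := hev; omega
      have hmr : (1 : ℝ) ≤ (m : ℝ) := by exact_mod_cast hm1
      have hD1 : (2 * (m : ℝ) + 2 * a₁ + a₂ - 2) ≠ 0 := by nlinarith
      have hD2 : (2 * (m : ℝ) + 2 * a₁ + a₂ - 1) ≠ 0 := by nlinarith
      have hD1C : (2 * (m : ℂ) + 2 * a₁ + a₂ - 2) ≠ 0 := by
        have := Complex.ofReal_ne_zero.2 hD1; push_cast at this; exact this
      have hD2C : (2 * (m : ℂ) + 2 * a₁ + a₂ - 1) ≠ 0 := by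
        have := Complex.ofReal_ne_zero.2 hD2; push_cast at this; exact this
      set C : ℂ := (m : ℂ) * ((m : ℂ) + 2 * a₁ - 1) /
          ((2 * (m : ℂ) + 2 * a₁ + a₂ - 2) * (2 * (m : ℂ) + 2 * a₁ + a₂ - 1) *
            ((c₁ : ℂ) ^ 2 - (c₂ : ℂ) ^ 2)) with hC
      have hten := ((aux_lin ((m : ℝ) + a₁ + a₂ - 1) (c₁ - c₂)).mul
        (aux_lin_neg ((m : ℝ) + a₁ + a₂ - 1) (c₁ + c₂))).const_mul C
      push_cast at hten
      rw [aux_ii] at hten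
      have hlim : C * ((c₁ : ℂ) ^ 2 - (c₂ : ℂ) ^ 2) = ((chiharaULim a₁ a₂ n : ℝ) : ℂ) := by
        simp only [chiharaULim, if_pos hev, ← hm, hC]
        push_cast
        field_simp
      rw [hlim] at hten
      refine hten.congr' ?_
      filter_upwards [eventually_ne_atTop (0 : ℝ)] with h hh
      have hhc : (h : ℂ) ≠ 0 := by exact_mod_cast hh
      simp only [ccBItau, if_pos hev, ← hm]
      push_cast
      rw [show ((m : ℂ) + a₁ + a₂ - 1 + I * ((h : ℂ) * c₁ - (h : ℂ) * c₂))
            = ((m : ℂ) + a₁ + a₂ - 1 + I * h * ((c₁ : ℂ) - c₂)) by ring,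
          show ((m : ℂ) + a₁ + a₂ - 1 - I * ((h : ℂ) * c₁ + (h : ℂ) * c₂))
            = ((m : ℂ) + a₁ + a₂ - 1 - I * h * ((c₁ : ℂ) + c₂)) by ring]
      generalize ((m : ℂ) + a₁ + a₂ - 1 + I * h * ((c₁ : ℂ) - c₂)) = p
      generalize ((m : ℂ) + a₁ + a₂ - 1 - I * h * ((c₁ : ℂ) + c₂)) = q
      rw [hC]
      field_simp
    · have hD2 : (2 * (m : ℝ) + 2 * a₁ + a₂) ≠ 0 := by positivity
      have hD2C : (2 * (m : ℂ) + 2 * a₁ + a₂) ≠ 0 := by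
        have := Complex.ofReal_ne_zero.2 hD2; push_cast at this; exact this
      by_cases hD1 : (2 * (m : ℝ) + 2 * a₁ + a₂ - 1) = 0
      · have hD1C : (2 * (m : ℂ) + 2 * a₁ + a₂ - 1) = 0 := by
          have : ((2 * (m : ℝ) + 2 * a₁ + a₂ - 1 : ℝ) : ℂ) = 0 := by rw [hD1]; norm_num
          push_cast at this; exact this
        have h1 : ((chiharaULim a₁ a₂ n : ℝ) : ℂ) = 0 := by
          simp [chiharaULim, if_neg hev, ← hm, hD1]
        rw [h1]
        have h2 : ∀ h : ℝ, ccBItau a₁ (h * c₁) a₂ (h * c₂) n = 0 := by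
          intro h
          simp only [ccBItau, if_neg hev, ← hm, if_false]
          rw [hD1C, zero_mul, div_zero]
        simp only [h2, zero_div]
        exact tendsto_const_nhds
      · have hD1C : (2 * (m : ℂ) + 2 * a₁ + a₂ - 1) ≠ 0 := by
          have := Complex.ofReal_ne_zero.2 hD1; push_cast at this; exact this
        set C : ℂ := ((m : ℂ) + 2 * a₁ + a₂ - 1) * ((m : ℂ) + a₂) /
            ((2 * (m : ℂ) + 2 * a₁ + a₂ - 1) * (2 * (m : ℂ) + 2 * a₁ + a₂) *
              ((c₁ : ℂ) ^ 2 - (c₂ : ℂ) ^ 2)) with hC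
        have hten := ((aux_lin ((m : ℝ) + a₁) (c₁ + c₂)).mul
          (aux_lin_neg ((m : ℝ) + a₁) (c₁ - c₂))).const_mul C
        push_cast at hten
        rw [show I * ((c₁ : ℂ) + c₂) * -(I * ((c₁ : ℂ) - c₂))
              = I * ((c₁ : ℂ) - c₂) * -(I * ((c₁ : ℂ) + c₂)) by ring, aux_ii] at hten
        have hlim : C * ((c₁ : ℂ) ^ 2 - (c₂ : ℂ) ^ 2) = ((chiharaULim a₁ a₂ n : ℝ) : ℂ) := by
          simp only [chiharaULim, if_neg hev, ← hm, hC, if_false]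
          push_cast
          field_simp
        rw [hlim] at hten
        refine hten.congr' ?_
        filter_upwards [eventually_ne_atTop (0 : ℝ)] with h hh
        have hhc : (h : ℂ) ≠ 0 := by exact_mod_cast hh
        simp only [ccBItau, if_neg hev, ← hm, if_false]
        push_cast
        rw [show ((m : ℂ) + a₁ + I * ((h : ℂ) * c₁ + (h : ℂ) * c₂))
              = ((m : ℂ) + a₁ + I * h * ((c₁ : ℂ) + c₂)) by ring,
            show ((m : ℂ) + a₁ - I * ((h : ℂ) * c₁ - (h : ℂ) * c₂))
              = ((m : ℂ) + a₁ - I * h * ((c₁ : ℂ) - c₂)) by ring]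
        generalize ((m : ℂ) + a₁ + I * h * ((c₁ : ℂ) + c₂)) = p
        generalize ((m : ℂ) + a₁ - I * h * ((c₁ : ℂ) - c₂)) = q
        rw [hC]
        field_simp
  · intro h hh
    rw [show (-1 : ℝ) ^ n * (h * c₂) = h * ((-1 : ℝ) ^ n * c₂) by ring,
      mul_div_mul_left _ _ (ne_of_gt hh)]
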